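/- Let 0 < p ≤ q < 1 and suppose that for all x ∈ [0,1], I_p(x) ≥ I_p(q) + (I_p'(q)/(2q))·(x² − q²), where I_p(x) = x log(x/p) + (1−x) log((1−x)/(1−p)). Then for every symmetric measurable W : [0,1]² → [0,1] with t(K₃, W) ≥ q³, one has ∫∫ I_p(W(x,y)) dx dy ≥ I_p(q). -/

import Mathlib

open MeasureTheory Real

noncomputable section

def I01 : Set ℝ := Set.Icc 0 1

/-- Triangle density of a kernel `W`. -/
def tK3 (W : ℝ → ℝ → ℝ) : ℝ :=
  ∫ x in I01, ∫ y in I01, ∫ z in I01, W x y * W x z * W y z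

/-- The relative entropy function `I_p`. -/
def Ip (p x : ℝ) : ℝ := x * Real.log (x / p) + (1 - x) * Real.log ((1 - x) / (1 - p))

/-- The derivative of `I_p`. -/
def Ip' (p q : ℝ) : ℝ := Real.log (q / p) - Real.log ((1 - q) / (1 - p))

/-!
Writing `d(x) = ∫ W(x,z)² dz` and `codeg(x,y) = ∫ W(x,z) W(y,z) dz`, Cauchy–Schwarz in `z` gives
`codeg(x,y)² ≤ d(x) d(y)`, and Cauchy–Schwarz in `(x,y)` then gives
`t(K₃,W) = ∫∫ W · codeg ≤ ‖W‖₂ ‖codeg‖₂ ≤ ‖W‖₂ · ‖W‖₂²`. Hence `t(K₃,W) ≥ q³` forces `E[W²] ≥ q²`.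
Integrating the quadratic minorant of `I_p` then yields
`∫∫ I_p(W) ≥ I_p(q) + (I_p'(q)/2q) (E[W²] − q²) ≥ I_p(q)`, since `I_p'(q) ≥ 0` for `q ≥ p`.
-/

open Set Function

section Measure

variable {α : Type*} [MeasurableSpace α] {μ : Measure α}

theorem integral_mul_le_sqrt_mul_sqrt_of_nonneg {f g : α → ℝ}
    (hf₀ : 0 ≤ᵐ[μ] f) (hg₀ : 0 ≤ᵐ[μ] g) (hf : MemLp f 2 μ) (hg : MemLp g 2 μ) :
    ∫ a, f a * g a ∂μ ≤ √(∫ a, f a ^ 2 ∂μ) * √(∫ a, g a ^ 2 ∂μ) := by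
  have h2 : (2 : ℝ).HolderConjugate 2 := Real.holderConjugate_iff.mpr ⟨one_lt_two, by norm_num⟩
  have hofReal : ENNReal.ofReal 2 = 2 := by norm_num
  have h := integral_mul_le_Lp_mul_Lq_of_nonneg h2 hf₀ hg₀ (hofReal ▸ hf) (hofReal ▸ hg)
  simpa only [Real.rpow_two, ← Real.sqrt_eq_rpow] using h

theorem memLp_of_mem_Icc_zero_one [IsFiniteMeasure μ] {f : α → ℝ} (hf : Measurable f)
    (hf01 : ∀ a, f a ∈ Icc 0 1) (p : ENNReal) : MemLp f p μ :=
  MemLp.of_bound hf.aestronglyMeasurable 1 <| ae_of_all _ fun a =>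
    abs_le.mpr ⟨by linarith [(hf01 a).1], (hf01 a).2⟩

theorem Continuous.integrable_comp_of_mapsTo_isCompact [IsFiniteMeasure μ] {φ : ℝ → ℝ}
    (hφ : Continuous φ) {K : Set ℝ} (hK : IsCompact K) {f : α → ℝ} (hf : Measurable f)
    (hfK : ∀ a, f a ∈ K) : Integrable (φ ∘ f) μ := by
  obtain ⟨C, hC⟩ := hK.exists_bound_of_continuousOn hφ.continuousOn
  exact .of_bound (hφ.measurable.comp hf).aestronglyMeasurable C
    (ae_of_all _ fun a => hC _ (hfK a))

theorem add_mul_integral_sq_sub_le_integral_comp [IsProbabilityMeasure μ] {φ : ℝ → ℝ}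
    (hφ : Continuous φ) {f : α → ℝ} (hf : Measurable f) (hf01 : ∀ a, f a ∈ Icc 0 1)
    {a c b : ℝ} (hmin : ∀ t ∈ Icc (0 : ℝ) 1, a + c * (t ^ 2 - b) ≤ φ t) :
    a + c * ((∫ x, f x ^ 2 ∂μ) - b) ≤ ∫ x, φ (f x) ∂μ := by
  have hf2 : Integrable (fun x => f x ^ 2) μ := (memLp_of_mem_Icc_zero_one hf hf01 2).integrable_sq
  have hquad : Integrable (fun x => c * (f x ^ 2 - b)) μ :=
    (hf2.sub (integrable_const b)).const_mul c
  have hlin : ∫ x, a + c * (f x ^ 2 - b) ∂μ = a + c * ((∫ x, f x ^ 2 ∂μ) - b) := by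
    rw [integral_add (integrable_const a) hquad, integral_const_mul,
      integral_sub hf2 (integrable_const b)]
    simp
  rw [← hlin]
  exact integral_mono ((integrable_const a).add hquad)
    (hφ.integrable_comp_of_mapsTo_isCompact isCompact_Icc hf hf01)
    fun x => hmin _ (hf01 x)

end Measure

section Graphon

variable {α : Type*} [MeasurableSpace α] (μ : Measure α) (W : α → α → ℝ)

def codegree (x y : α) : ℝ := ∫ z, W x z * W y z ∂μ

variable {μ W}

theorem measurable_codegree [SFinite μ] (hW : Measurable (uncurry W)) :
    Measurable (uncurry (codegree μ W)) := by
  have h : Measurable fun t : (α × α) × α => W t.1.1 t.2 * W t.1.2 t.2 :=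
    (hW.comp (measurable_fst.fst.prodMk measurable_snd)).mul
      (hW.comp (measurable_fst.snd.prodMk measurable_snd))
  exact h.stronglyMeasurable.integral_prod_right'.measurable

variable [IsProbabilityMeasure μ]

theorem codegree_mem_Icc (hW : Measurable (uncurry W)) (hW01 : ∀ x y, W x y ∈ Icc 0 1)
    (x y : α) : codegree μ W x y ∈ Icc 0 1 := by
  have hmeas : Measurable fun z => W x z * W y z :=
    (hW.comp measurable_prodMk_left).mul (hW.comp measurable_prodMk_left)
  have hprod : ∀ z, W x z * W y z ∈ Icc 0 1 := fun z =>
    ⟨mul_nonneg (hW01 x z).1 (hW01 y z).1, mul_le_one₀ (hW01 x z).2 (hW01 y z).1 (hW01 y z).2⟩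
  refine ⟨integral_nonneg fun z => (hprod z).1, ?_⟩
  calc codegree μ W x y ≤ ∫ _z, (1 : ℝ) ∂μ :=
        integral_mono ((memLp_of_mem_Icc_zero_one hmeas hprod 1).integrable le_rfl)
          (integrable_const 1) fun z => (hprod z).2
    _ = 1 := by simp

theorem codegree_sq_le (hW : Measurable (uncurry W)) (hW01 : ∀ x y, W x y ∈ Icc 0 1)
    (x y : α) :
    codegree μ W x y ^ 2 ≤ (∫ z, W x z ^ 2 ∂μ) * ∫ z, W y z ^ 2 ∂μ := by
  have hL : ∀ x, MemLp (W x) 2 μ := fun x =>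
    memLp_of_mem_Icc_zero_one (hW.comp measurable_prodMk_left) (hW01 x) 2
  have hcs := integral_mul_le_sqrt_mul_sqrt_of_nonneg (ae_of_all _ fun z => (hW01 x z).1)
    (ae_of_all _ fun z => (hW01 y z).1) (hL x) (hL y)
  calc codegree μ W x y ^ 2 ≤ (√(∫ z, W x z ^ 2 ∂μ) * √(∫ z, W y z ^ 2 ∂μ)) ^ 2 :=
        pow_le_pow_left₀ (codegree_mem_Icc hW hW01 x y).1 hcs 2
    _ = _ := by
        rw [mul_pow, Real.sq_sqrt (integral_nonneg fun z => sq_nonneg _),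
          Real.sq_sqrt (integral_nonneg fun z => sq_nonneg _)]

theorem integral_codegree_sq_le (hW : Measurable (uncurry W))
    (hW01 : ∀ x y, W x y ∈ Icc 0 1) :
    ∫ p, codegree μ W p.1 p.2 ^ 2 ∂μ.prod μ ≤ (∫ p, W p.1 p.2 ^ 2 ∂μ.prod μ) ^ 2 := by
  set d : α → ℝ := fun x => ∫ z, W x z ^ 2 ∂μ
  have hd : Measurable d := (hW.pow_const 2).stronglyMeasurable.integral_prod_right'.measurable
  have hd01 : ∀ x, d x ∈ Icc 0 1 := fun x =>
    ⟨integral_nonneg fun z => sq_nonneg _, by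
      simpa using integral_mono ((memLp_of_mem_Icc_zero_one (hW.comp measurable_prodMk_left)
        (hW01 x) 2).integrable_sq) (integrable_const (μ := μ) (1 : ℝ))
          fun z => pow_le_one₀ (hW01 x z).1 (hW01 x z).2⟩
  have hW2 : ∫ p, W p.1 p.2 ^ 2 ∂μ.prod μ = ∫ x, d x ∂μ :=
    (integral_integral (f := fun x y => W x y ^ 2)
      (memLp_of_mem_Icc_zero_one hW (fun p => hW01 p.1 p.2) 2).integrable_sq).symm
  rw [hW2, sq, ← integral_prod_mul d d]
  refine integral_mono
    (memLp_of_mem_Icc_zero_one (measurable_codegree hW)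
      (fun p => codegree_mem_Icc hW hW01 p.1 p.2) 2).integrable_sq ?_
    fun p => codegree_sq_le hW hW01 p.1 p.2
  exact memLp_of_mem_Icc_zero_one ((hd.comp measurable_fst).mul (hd.comp measurable_snd))
    (fun p => ⟨mul_nonneg (hd01 p.1).1 (hd01 p.2).1,
      mul_le_one₀ (hd01 p.1).2 (hd01 p.2).1 (hd01 p.2).2⟩) 1 |>.integrable le_rfl

theorem integral_triangle_le_sqrt_integral_sq_pow_three (hW : Measurable (uncurry W))
    (hW01 : ∀ x y, W x y ∈ Icc 0 1) :
    ∫ x, ∫ y, ∫ z, W x y * W x z * W y z ∂μ ∂μ ∂μ ≤ √(∫ p, W p.1 p.2 ^ 2 ∂μ.prod μ) ^ 3 := by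
  set A := ∫ p, W p.1 p.2 ^ 2 ∂μ.prod μ
  have hWL : MemLp (uncurry W) 2 (μ.prod μ) :=
    memLp_of_mem_Icc_zero_one hW (fun p => hW01 p.1 p.2) 2
  have hGL : MemLp (uncurry (codegree μ W)) 2 (μ.prod μ) :=
    memLp_of_mem_Icc_zero_one (measurable_codegree hW)
      (fun p => codegree_mem_Icc hW hW01 p.1 p.2) 2
  have hiter : ∫ x, ∫ y, ∫ z, W x y * W x z * W y z ∂μ ∂μ ∂μ
      = ∫ p, W p.1 p.2 * codegree μ W p.1 p.2 ∂μ.prod μ := by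
    simp_rw [mul_assoc, integral_const_mul]
    exact integral_integral (hWL.integrable_mul hGL)
  rw [hiter]
  calc ∫ p, W p.1 p.2 * codegree μ W p.1 p.2 ∂μ.prod μ
      ≤ √A * √(∫ p, codegree μ W p.1 p.2 ^ 2 ∂μ.prod μ) :=
        integral_mul_le_sqrt_mul_sqrt_of_nonneg (ae_of_all _ fun p => (hW01 p.1 p.2).1)
          (ae_of_all _ fun p => (codegree_mem_Icc hW hW01 p.1 p.2).1) hWL hGL
    _ ≤ √A * √(A ^ 2) := by
        gcongr
        exact integral_codegree_sq_le hW hW01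
    _ = √A ^ 3 := by
        have hA : 0 ≤ A := integral_nonneg fun p => sq_nonneg (W p.1 p.2)
        rw [Real.sqrt_sq hA]
        nth_rewrite 2 [← Real.sq_sqrt hA]
        ring

end Graphon

section Entropy

theorem mul_log_div_eq (x : ℝ) {y : ℝ} (hy : y ≠ 0) : x * log (x / y) = x * log x - x * log y := by
  rcases eq_or_ne x 0 with rfl | hx
  · simp
  · rw [log_div hx hy]; ring

theorem continuous_Ip {p : ℝ} (hp₀ : p ≠ 0) (hp₁ : p ≠ 1) : Continuous (Ip p) := by
  have hsplit : Ip p = fun x => (x * log x - x * log p)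
      + ((1 - x) * log (1 - x) - (1 - x) * log (1 - p)) := by
    funext x
    rw [Ip, mul_log_div_eq x hp₀, mul_log_div_eq (1 - x) (sub_ne_zero.mpr hp₁.symm)]
  have h₁ : Continuous fun x : ℝ => (1 - x) * log (1 - x) :=
    continuous_mul_log.comp (continuous_const.sub continuous_id)
  rw [hsplit]
  fun_prop

theorem Ip'_nonneg {p q : ℝ} (hp : 0 < p) (hpq : p ≤ q) (hq : q < 1) : 0 ≤ Ip' p q := by
  have h₁ : 0 ≤ log (q / p) := log_nonneg ((one_le_div hp).2 hpq)
  have h₂ : log ((1 - q) / (1 - p)) ≤ 0 :=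
    log_nonpos (div_nonneg (by linarith) (by linarith)) ((div_le_one (by linarith)).2 (by linarith))
  rw [Ip']
  linarith

end Entropy

theorem stmt_4_general (p q : ℝ) (hp : 0 < p) (hpq : p ≤ q) (hq : q < 1)
    (htangent : ∀ x ∈ Set.Icc (0 : ℝ) 1,
      Ip p x ≥ Ip p q + (Ip' p q / (2 * q)) * (x ^ 2 - q ^ 2))
    (W : ℝ → ℝ → ℝ)
    (hrange : ∀ x y, W x y ∈ Set.Icc (0 : ℝ) 1)
    (hmeas : Measurable (Function.uncurry W))
    (ht : tK3 W ≥ q ^ 3) :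
    (∫ x in I01, ∫ y in I01, Ip p (W x y)) ≥ Ip p q := by
  have : IsProbabilityMeasure (volume.restrict I01) := ⟨by simp [I01]⟩
  have hq₀ : 0 < q := hp.trans_le hpq
  set A := ∫ z, W z.1 z.2 ^ 2 ∂(volume.restrict I01).prod (volume.restrict I01)
  have hqA : q ^ 2 ≤ A := by
    have hcube := ht.trans (integral_triangle_le_sqrt_integral_sq_pow_three hmeas hrange)
    exact (le_sqrt' hq₀).1 <|
      (pow_le_pow_iff_left₀ hq₀.le (sqrt_nonneg _) three_ne_zero).1 hcube
  have hIp := continuous_Ip hp.ne' (hpq.trans_lt hq).ne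
  have hc : 0 ≤ Ip' p q / (2 * q) * (A - q ^ 2) :=
    mul_nonneg (div_nonneg (Ip'_nonneg hp hpq hq) (by positivity)) (sub_nonneg.2 hqA)
  rw [ge_iff_le, integral_integral (f := fun x y => Ip p (W x y))
    (hIp.integrable_comp_of_mapsTo_isCompact isCompact_Icc hmeas fun z => hrange z.1 z.2)]
  have hlower : Ip p q + Ip' p q / (2 * q) * (A - q ^ 2) ≤
      ∫ z, Ip p (W z.1 z.2) ∂(volume.restrict I01).prod (volume.restrict I01) :=
    add_mul_integral_sq_sub_le_integral_comp hIp hmeas (fun z => hrange z.1 z.2) htangent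
  linarith

theorem stmt_4 (p q : ℝ) (hp : 0 < p) (hpq : p ≤ q) (hq : q < 1)
    (htangent : ∀ x ∈ Set.Icc (0 : ℝ) 1,
      Ip p x ≥ Ip p q + (Ip' p q / (2 * q)) * (x ^ 2 - q ^ 2))
    (W : ℝ → ℝ → ℝ)
    (hrange : ∀ x y, W x y ∈ Set.Icc (0 : ℝ) 1)
    (hsymm : ∀ x y, W x y = W y x)
    (hmeas : Measurable (Function.uncurry W))
    (ht : tK3 W ≥ q ^ 3) :
    (∫ x in I01, ∫ y in I01, Ip p (W x y)) ≥ Ip p q :=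
  stmt_4_general p q hp hpq hq htangent W hrange hmeas ht
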